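/- Let V_sp := {C ∈ Mat(2n×2n,ℝ) : Cᵀ = C and C·J + J·C = 0}. For every D ∈ Mat(2n×2n,ℝ) with D·J = J·D and Dᵀ = D, the linear map C ↦ D·C + C·D preserves V_sp, and its trace as an endomorphism of V_sp equals (n+1)·Tr(D). (This is the trace identity used for the symplectic family sp(ℝ^{2(k'+n)}, Ω̃), giving the Einstein constant ½(2k'+n+1) and the Chern–Ricci constant (n+1−k).) -/

import Mathlib

open Matrix

/-- The standard complex structure matrix `J = [[0, -Id_n],[Id_n, 0]]`. -/
noncomputable def Jmat (n : ℕ) : Matrix (Fin n ⊕ Fin n) (Fin n ⊕ Fin n) ℝ :=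
  Matrix.fromBlocks 0 (-1) 1 0

/-- The subspace `V_sp = {C : Cᵀ = C and C·J + J·C = 0}` of `2n×2n` real matrices. -/
noncomputable def Vsp (n : ℕ) : Submodule ℝ (Matrix (Fin n ⊕ Fin n) (Fin n ⊕ Fin n) ℝ) where
  carrier := {C | C.transpose = C ∧ C * Jmat n + Jmat n * C = 0}
  add_mem' := by
    rintro a b ⟨ha1, ha2⟩ ⟨hb1, hb2⟩
    refine ⟨by rw [Matrix.transpose_add, ha1, hb1], ?_⟩
    rw [add_mul, mul_add]
    calc a * Jmat n + b * Jmat n + (Jmat n * a + Jmat n * b)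
        = (a * Jmat n + Jmat n * a) + (b * Jmat n + Jmat n * b) := by abel
      _ = 0 := by rw [ha2, hb2]; simp
  zero_mem' := by simp
  smul_mem' := by
    rintro c x ⟨hx1, hx2⟩
    refine ⟨by rw [Matrix.transpose_smul, hx1], ?_⟩
    rw [Matrix.smul_mul, Matrix.mul_smul, ← smul_add, hx2, smul_zero]

namespace TraceAux

open LinearMap

variable {m : Type*} [Fintype m] [DecidableEq m]

set_option linter.unusedSectionVars false in
lemma repr_std (M : Matrix m m ℝ) (p : m × m) : (Matrix.stdBasis ℝ m m).repr M p = M p.1 p.2 := by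
  simp [Matrix.stdBasis, Pi.basis_repr, Pi.basisFun_repr]

lemma traceEnd (f : Matrix m m ℝ →ₗ[ℝ] Matrix m m ℝ) :
    LinearMap.trace ℝ _ f = ∑ p : m × m, f (Matrix.single p.1 p.2 (1:ℝ)) p.1 p.2 := by
  rw [LinearMap.trace_eq_matrix_trace ℝ (Matrix.stdBasis ℝ m m), Matrix.trace]
  simp only [Matrix.diag, LinearMap.toMatrix_apply, repr_std]
  exact Finset.sum_congr rfl fun p _ => by
    rw [show (Matrix.stdBasis ℝ m m) p = Matrix.single p.1 p.2 (1:ℝ) from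
      Matrix.stdBasis_eq_single (R := ℝ) p.1 p.2]

lemma traceLR (A B : Matrix m m ℝ) :
    LinearMap.trace ℝ _ ((mulLeft ℝ A) ∘ₗ (mulRight ℝ B)) = A.trace * B.trace := by
  rw [traceEnd]
  have : ∀ p : m × m, ((mulLeft ℝ A ∘ₗ mulRight ℝ B) (Matrix.single p.1 p.2 (1:ℝ))) p.1 p.2
      = A p.1 p.1 * B p.2 p.2 := by
    rintro ⟨i, j⟩
    simp [Matrix.mul_apply, Matrix.single, Finset.sum_apply, ite_and, Finset.mul_sum]
  rw [Finset.sum_congr rfl (fun p _ => this p)]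
  rw [← Finset.univ_product_univ, Finset.sum_product]
  simp [Matrix.trace, Matrix.diag, Finset.sum_mul_sum]

lemma traceTR (A B : Matrix m m ℝ) (g : Matrix m m ℝ →ₗ[ℝ] Matrix m m ℝ)
    (hg : ∀ C, g C = Cᵀ) :
    LinearMap.trace ℝ _ ((mulLeft ℝ A) ∘ₗ (mulRight ℝ B) ∘ₗ g) = (A * Bᵀ).trace := by
  rw [traceEnd]
  have : ∀ p : m × m, ((mulLeft ℝ A ∘ₗ mulRight ℝ B ∘ₗ g) (Matrix.single p.1 p.2 (1:ℝ))) p.1 p.2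
      = A p.1 p.2 * B p.1 p.2 := by
    rintro ⟨i, j⟩
    simp only [coe_comp, Function.comp_apply, mulLeft_apply, mulRight_apply, hg]
    simp [Matrix.mul_apply, Matrix.single, Finset.sum_apply, ite_and, Finset.mul_sum,
      Matrix.transpose_apply]
  rw [Finset.sum_congr rfl (fun p _ => this p)]
  rw [Matrix.trace, ← Finset.univ_product_univ, Finset.sum_product]
  simp [Matrix.diag, Matrix.mul_apply, Matrix.transpose_apply]

lemma trace_restrict_eq_comp_proj {M : Type*} [AddCommGroup M] [Module ℝ M]
    [Module.Finite ℝ M] [Module.Free ℝ M]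
    {p : Submodule ℝ M} {π : M →ₗ[ℝ] M} (hπ : LinearMap.IsProj p π)
    (f : M →ₗ[ℝ] M) (h : ∀ x ∈ p, f x ∈ p) :
    LinearMap.trace ℝ p (f.restrict h) = LinearMap.trace ℝ M (f ∘ₗ π) := by
  have h1 : f.restrict h = hπ.codRestrict ∘ₗ (f ∘ₗ p.subtype) := by
    ext x
    simp only [restrict_coe_apply, coe_comp, Function.comp_apply, Submodule.coe_subtype,
      LinearMap.IsProj.codRestrict_apply]
    exact (hπ.map_id _ (h x x.2)).symm
  have h2 : (f ∘ₗ p.subtype) ∘ₗ hπ.codRestrict = f ∘ₗ π := by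
    ext x
    simp [LinearMap.IsProj.codRestrict_apply]
  rw [h1, LinearMap.trace_comp_comm', h2]

lemma J_sq (n : ℕ) : Jmat n * Jmat n = -1 := by
  simp only [Jmat, Matrix.fromBlocks_multiply]
  ext (i|i) (j|j) <;> simp [Matrix.fromBlocks, Matrix.one_apply]

lemma J_t (n : ℕ) : (Jmat n)ᵀ = -(Jmat n) := by
  simp only [Jmat, Matrix.fromBlocks_transpose]
  ext (i|i) (j|j) <;> simp [Matrix.fromBlocks, Matrix.one_apply]

lemma J_tr (n : ℕ) : (Jmat n).trace = 0 := by
  simp [Jmat, Matrix.trace, Matrix.diag, Matrix.fromBlocks]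

noncomputable def Tp (n : ℕ) :
    Matrix (Fin n ⊕ Fin n) (Fin n ⊕ Fin n) ℝ →ₗ[ℝ] Matrix (Fin n ⊕ Fin n) (Fin n ⊕ Fin n) ℝ :=
  (Matrix.transposeLinearEquiv (Fin n ⊕ Fin n) (Fin n ⊕ Fin n) ℝ ℝ).toLinearMap

noncomputable def piSp (n : ℕ) :
    Matrix (Fin n ⊕ Fin n) (Fin n ⊕ Fin n) ℝ →ₗ[ℝ] Matrix (Fin n ⊕ Fin n) (Fin n ⊕ Fin n) ℝ :=
  (1/4 : ℝ) • (LinearMap.id + Tp n + (mulLeft ℝ (Jmat n) ∘ₗ mulRight ℝ (Jmat n))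
    + (mulLeft ℝ (Jmat n) ∘ₗ mulRight ℝ (Jmat n) ∘ₗ Tp n))

lemma Tp_apply (n : ℕ) (C : Matrix (Fin n ⊕ Fin n) (Fin n ⊕ Fin n) ℝ) : Tp n C = Cᵀ := rfl

lemma piSp_apply (n : ℕ) (C : Matrix (Fin n ⊕ Fin n) (Fin n ⊕ Fin n) ℝ) :
    piSp n C = (1/4 : ℝ) • (C + Cᵀ + Jmat n * (C * Jmat n) + Jmat n * (Cᵀ * Jmat n)) := by
  simp [piSp, Tp]

lemma mem_Vsp (n : ℕ) (C : Matrix (Fin n ⊕ Fin n) (Fin n ⊕ Fin n) ℝ) :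
    C ∈ Vsp n ↔ Cᵀ = C ∧ C * Jmat n + Jmat n * C = 0 := Iff.rfl

lemma isProj_piSp (n : ℕ) : LinearMap.IsProj (Vsp n) (piSp n) := by
  constructor
  · intro x
    rw [mem_Vsp, piSp_apply]
    constructor
    · rw [Matrix.transpose_smul]
      congr 1
      simp only [Matrix.transpose_add, Matrix.transpose_mul, Matrix.transpose_transpose, J_t,
        Matrix.neg_mul, Matrix.mul_neg, neg_neg, mul_assoc]
      abel
    · rw [Matrix.smul_mul, Matrix.mul_smul, ← smul_add]
      rw [show ((x + xᵀ + Jmat n * (x * Jmat n) + Jmat n * (xᵀ * Jmat n)) * Jmat n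
          + Jmat n * (x + xᵀ + Jmat n * (x * Jmat n) + Jmat n * (xᵀ * Jmat n))) = 0 from ?_,
        smul_zero]
      simp only [add_mul, mul_add, mul_assoc, J_sq, Matrix.mul_neg, Matrix.mul_one,
        Matrix.neg_mul, Matrix.one_mul, neg_smul, one_smul, neg_neg]
      rw [← Matrix.mul_assoc (Jmat n) (Jmat n) (x * Jmat n),
        ← Matrix.mul_assoc (Jmat n) (Jmat n) (xᵀ * Jmat n), J_sq, neg_one_mul, neg_one_mul]
      abel
  · intro x hx
    rw [mem_Vsp] at hx
    obtain ⟨h1, h2⟩ := hx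
    have h3 : x * Jmat n = -(Jmat n * x) := eq_neg_of_add_eq_zero_left h2
    have h4 : Jmat n * (x * Jmat n) = x := by
      rw [h3, Matrix.mul_neg, ← Matrix.mul_assoc, J_sq]
      simp
    rw [piSp_apply, h1, h4]
    rw [show x + x + x + x = (4:ℝ) • x by module]
    rw [smul_smul]
    norm_num

end TraceAux

open TraceAux LinearMap in
theorem trace_identity_symplectic (n : ℕ) (hn : 0 < n)
    (D : Matrix (Fin n ⊕ Fin n) (Fin n ⊕ Fin n) ℝ)
    (hDJ : D * Jmat n = Jmat n * D) (hDt : D.transpose = D) :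
    ∃ h : ∀ C ∈ Vsp n, (LinearMap.mulLeft ℝ D + LinearMap.mulRight ℝ D) C ∈ Vsp n,
      LinearMap.trace ℝ ↥(Vsp n)
          ((LinearMap.mulLeft ℝ D + LinearMap.mulRight ℝ D).restrict h) =
        ((n : ℝ) + 1) * Matrix.trace D := by
  have hmem : ∀ C ∈ Vsp n, (LinearMap.mulLeft ℝ D + LinearMap.mulRight ℝ D) C ∈ Vsp n := by
    intro C hC
    rw [mem_Vsp] at hC
    obtain ⟨h1, h2⟩ := hC
    simp only [LinearMap.add_apply, mulLeft_apply, mulRight_apply, mem_Vsp]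
    constructor
    · rw [Matrix.transpose_add, Matrix.transpose_mul, Matrix.transpose_mul, h1, hDt]
      abel
    · have key : (D * C + C * D) * Jmat n + Jmat n * (D * C + C * D)
          = D * (C * Jmat n + Jmat n * C) + (C * Jmat n + Jmat n * C) * D := by
        simp only [Matrix.mul_add, Matrix.add_mul, Matrix.mul_assoc]
        rw [← Matrix.mul_assoc (Jmat n) D C, ← hDJ, Matrix.mul_assoc D (Jmat n) C]
        rw [show C * (D * Jmat n) = C * (Jmat n * D) by rw [hDJ]]
        abel
      rw [key, h2, Matrix.mul_zero, Matrix.zero_mul, add_zero]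
  refine ⟨hmem, ?_⟩
  rw [trace_restrict_eq_comp_proj (isProj_piSp n) _ hmem]
  have hid : (LinearMap.mulLeft ℝ D + LinearMap.mulRight ℝ D) ∘ₗ piSp n
      = (1/4 : ℝ) • ((mulLeft ℝ D ∘ₗ mulRight ℝ 1)
        + (mulLeft ℝ D ∘ₗ mulRight ℝ 1 ∘ₗ Tp n)
        + (mulLeft ℝ (D * Jmat n) ∘ₗ mulRight ℝ (Jmat n))
        + (mulLeft ℝ (D * Jmat n) ∘ₗ mulRight ℝ (Jmat n) ∘ₗ Tp n)
        + (mulLeft ℝ 1 ∘ₗ mulRight ℝ D)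
        + (mulLeft ℝ 1 ∘ₗ mulRight ℝ D ∘ₗ Tp n)
        + (mulLeft ℝ (Jmat n) ∘ₗ mulRight ℝ (Jmat n * D))
        + (mulLeft ℝ (Jmat n) ∘ₗ mulRight ℝ (Jmat n * D) ∘ₗ Tp n)) := by
    refine LinearMap.ext fun C => ?_
    simp only [coe_comp, Function.comp_apply, LinearMap.add_apply, LinearMap.smul_apply, mulLeft_apply,
      mulRight_apply, piSp_apply, Tp_apply]
    simp only [Matrix.mul_smul, Matrix.smul_mul, smul_add, Matrix.mul_add, Matrix.add_mul,
      Matrix.mul_one, Matrix.one_mul, Matrix.mul_assoc]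
    abel
  rw [hid, _root_.map_smul]
  simp only [map_add]
  rw [traceLR D 1, traceTR D 1 (Tp n) (Tp_apply n),
    traceLR (D * Jmat n) (Jmat n), traceTR (D * Jmat n) (Jmat n) (Tp n) (Tp_apply n),
    traceLR 1 D, traceTR 1 D (Tp n) (Tp_apply n),
    traceLR (Jmat n) (Jmat n * D), traceTR (Jmat n) (Jmat n * D) (Tp n) (Tp_apply n)]
  have e1 : (1 : Matrix (Fin n ⊕ Fin n) (Fin n ⊕ Fin n) ℝ).trace = 2 * (n : ℝ) := by
    rw [Matrix.trace_one]
    simp [Fintype.card_sum]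
    ring
  have e4 : ((D * Jmat n) * (Jmat n)ᵀ).trace = D.trace := by
    rw [J_t, Matrix.mul_neg, Matrix.mul_assoc, J_sq, Matrix.mul_neg, Matrix.mul_one, neg_neg]
  have e8 : (Jmat n * (Jmat n * D)ᵀ).trace = D.trace := by
    rw [Matrix.transpose_mul, hDt, J_t, Matrix.mul_neg, Matrix.mul_neg, Matrix.trace_neg,
      ← Matrix.mul_assoc, Matrix.trace_mul_cycle, J_sq, neg_one_mul,
      Matrix.trace_neg, neg_neg]
  rw [e1, e4, e8, J_tr, Matrix.transpose_one, Matrix.mul_one, Matrix.one_mul, hDt]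
  simp only [smul_eq_mul]
  ring
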